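/- arXiv:1509.04400 — 6 statements merged into one kernel-verified Lean document; each statement's English description precedes it below -/
import Mathlib

section
/- Let A be a commutative ring, B a module-finite extension of A, Q a prime ideal of B lying over a prime ideal P of A. If the inclusion P → Q splits as a map of A-modules and depth_P(A) ≥ 2 (so that Ext^1_A(B/Q, A) = 0), then there exists an A-module splitting θ : B → A of the inclusion A → B with θ(Q) = P; in particular A/P → B/Q splits as a map of A-modules. -/
/-!
STATEMENT 0: Let `A` be a Noetherian commutative ring, `B` a module-finite extension of `A`
(an injective module-finite ring map), `Q` a prime ideal of `B` lying over the prime ideal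
`P` of `A`.  If the inclusion `P → Q` splits as a map of `A`-modules and `depth_P A ≥ 2`
(there is a regular sequence of length two in `P`), then there exists an `A`-module
splitting `θ : B → A` of the inclusion `A → B` with `θ(Q) = P`; in particular
`A/P → B/Q` splits as a map of `A`-modules.
-/

theorem stmt0
    (A B : Type*) [CommRing A] [CommRing B] [IsNoetherianRing A]
    [Algebra A B]
    (hinj : Function.Injective (algebraMap A B))
    (hfin : Module.Finite A B)
    (Q : Ideal B) (hQ : Q.IsPrime)
    (P : Ideal A) (hPQ : Q.comap (algebraMap A B) = P)
    -- the inclusion `P → Q` splits as a map of `A`-modules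
    (hsplit : ∃ φ : (Q.restrictScalars A) →ₗ[A] P,
      ∀ p : P, φ ⟨algebraMap A B p.1, by
        have : (p : A) ∈ Q.comap (algebraMap A B) := hPQ ▸ p.2
        exact this⟩ = p)
    -- `depth_P A ≥ 2`: a regular sequence of length two inside `P`
    (hdepth : ∃ x ∈ P, ∃ y ∈ P, IsSMulRegular A x ∧
      IsSMulRegular (A ⧸ Ideal.span {x}) (Ideal.Quotient.mk (Ideal.span {x}) y)) :
    ∃ θ : B →ₗ[A] A,
      (∀ a : A, θ (algebraMap A B a) = a) ∧
      Submodule.map θ (Q.restrictScalars A) = P ∧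
      ∃ ψ : (B ⧸ Q) →ₗ[A] (A ⧸ P),
        ∀ a : A, ψ (Ideal.Quotient.mk Q (algebraMap A B a)) = Ideal.Quotient.mk P a := by
  obtain ⟨x, hxP, y, hyP, hx, hy⟩ := hdepth
  obtain ⟨φ, hφ⟩ := hsplit
  have hmem : ∀ (a : A), a ∈ P → ∀ b : B, a • b ∈ Q.restrictScalars A := by
    intro a ha b
    have haQ : algebraMap A B a ∈ Q := by rw [← hPQ] at ha; exact ha
    show a • b ∈ Q
    rw [Algebra.smul_def]
    exact Ideal.mul_mem_right _ _ haQ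
  set φ' : (Q.restrictScalars A) →ₗ[A] A := P.subtype ∘ₗ φ with hφ'def
  have hφ'P : ∀ p : P, φ' ⟨algebraMap A B p.1, by
      have : (p : A) ∈ Q.comap (algebraMap A B) := hPQ ▸ p.2
      exact this⟩ = p := by
    intro p
    simp only [hφ'def, LinearMap.comp_apply, Submodule.subtype_apply]
    rw [hφ p]
  -- key divisibility
  have key : ∀ b : B, ∃ c : A, φ' ⟨x • b, hmem x hxP b⟩ = x * c := by
    intro b
    have h1 : y * φ' ⟨x • b, hmem x hxP b⟩ = x * φ' ⟨y • b, hmem y hyP b⟩ := by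
      rw [← smul_eq_mul, ← smul_eq_mul, ← map_smul, ← map_smul]
      congr 1
      apply Subtype.ext
      show y • (x • b) = x • (y • b)
      rw [smul_comm]
    have h2 : φ' ⟨x • b, hmem x hxP b⟩ ∈ Ideal.span {x} := by
      rw [← Ideal.Quotient.eq_zero_iff_mem]
      apply hy
      show _ • _ = _ • _
      rw [smul_eq_mul, ← map_mul, h1, smul_zero, Ideal.Quotient.eq_zero_iff_mem]
      exact Ideal.mul_mem_right _ _ (Ideal.mem_span_singleton_self x)
    obtain ⟨c, hc⟩ := Ideal.mem_span_singleton.mp h2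
    exact ⟨c, hc⟩
  choose f hf using key
  have hxinj : ∀ a a' : A, x * a = x * a' → a = a' := by
    intro a a' h
    exact hx (by simpa [smul_eq_mul] using h)
  have fadd : ∀ b b' : B, f (b + b') = f b + f b' := by
    intro b b'
    apply hxinj
    rw [mul_add, ← hf, ← hf, ← hf, ← map_add]
    congr 1
    apply Subtype.ext
    show x • (b + b') = x • b + x • b'
    rw [smul_add]
  have fsmul : ∀ (a : A) (b : B), f (a • b) = a * f b := by
    intro a b
    apply hxinj
    rw [← hf, mul_left_comm, ← hf, ← smul_eq_mul (α := A), ← map_smul]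
    congr 1
    apply Subtype.ext
    show x • (a • b) = a • (x • b)
    rw [smul_comm]
  set θ : B →ₗ[A] A :=
    { toFun := f
      map_add' := fadd
      map_smul' := by intro a b; simpa [smul_eq_mul] using fsmul a b } with hθdef
  have hθQ : ∀ (b : B) (hb : b ∈ Q.restrictScalars A), θ b = φ' ⟨b, hb⟩ := by
    intro b hb
    apply hxinj
    show x * f b = _
    rw [← hf, ← smul_eq_mul (α := A), ← map_smul]
    congr 1
  have hθP : ∀ p : A, p ∈ P → θ (algebraMap A B p) = p := by
    intro p hp
    have hmemQ : algebraMap A B p ∈ Q.restrictScalars A := by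
      show algebraMap A B p ∈ Q
      rw [← hPQ] at hp; exact hp
    rw [hθQ _ hmemQ]
    exact hφ'P ⟨p, hp⟩
  have hθ1 : θ 1 = 1 := by
    apply hxinj
    have : (algebraMap A B x) = x • (1 : B) := by
      rw [Algebra.smul_def, mul_one]
    calc x * θ 1 = θ (x • (1 : B)) := by rw [map_smul]; simp [smul_eq_mul]
    _ = x := by rw [← this]; exact hθP x hxP
    _ = x * 1 := by ring
  have hθalg : ∀ a : A, θ (algebraMap A B a) = a := by
    intro a
    rw [Algebra.algebraMap_eq_smul_one, map_smul, hθ1, smul_eq_mul, mul_one]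
  have hmap : Submodule.map θ (Q.restrictScalars A) = P := by
    apply le_antisymm
    · rintro _ ⟨b, hb, rfl⟩
      rw [hθQ b hb]
      exact (φ ⟨b, hb⟩).2
    · intro p hp
      exact ⟨algebraMap A B p, by show _ ∈ Q; rw [← hPQ] at hp; exact hp, hθP p hp⟩
  refine ⟨θ, hθalg, hmap, ?_⟩
  have hle : Q.restrictScalars A ≤ (Submodule.restrictScalars A P).comap θ := by
    intro b hb
    show θ b ∈ P
    rw [hθQ b hb]
    exact (φ ⟨b, hb⟩).2
  refine ⟨(Submodule.mapQ (Q.restrictScalars A) P θ hle).comp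
    (Submodule.Quotient.restrictScalarsEquiv A (Q : Submodule B B)).symm.toLinearMap, ?_⟩
  intro a
  have h1 : (Submodule.Quotient.restrictScalarsEquiv A (Q : Submodule B B)).symm
      (Submodule.Quotient.mk (algebraMap A B a)) = Submodule.Quotient.mk (algebraMap A B a) :=
    Submodule.Quotient.restrictScalarsEquiv_symm_mk A _ _
  show (Submodule.mapQ (Q.restrictScalars A) P θ hle)
      ((Submodule.Quotient.restrictScalarsEquiv A (Q : Submodule B B)).symm
        (Ideal.Quotient.mk Q (algebraMap A B a))) = _
  rw [show (Ideal.Quotient.mk Q (algebraMap A B a) : B ⧸ Q)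
      = Submodule.Quotient.mk (algebraMap A B a) from rfl, h1]
  show Submodule.Quotient.mk (θ (algebraMap A B a)) = _
  rw [hθalg a]
  rfl
end

section
/- Let A be a Noetherian commutative ring and α : P → Q an injective A-linear map of A-modules such that Q/α(P) is a finitely generated A-module. If for every A-module M the induced map P ⊗_A M → Q ⊗_A M is injective, then α splits as a map of A-modules. -/
/-!
STATEMENT 2 (Hochster–Roberts criterion): Let `A` be a Noetherian commutative ring and
`α : P → Q` an injective `A`-linear map of `A`-modules such that `Q/α(P)` is a finitely
generated `A`-module.  If for every `A`-module `M` the induced map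
`P ⊗_A M → Q ⊗_A M` is injective, then `α` splits as a map of `A`-modules.
-/

theorem stmt2
    (A : Type) [CommRing A] [IsNoetherianRing A]
    (P Q : Type) [AddCommGroup P] [AddCommGroup Q] [Module A P] [Module A Q]
    (α : P →ₗ[A] Q)
    (hinj : Function.Injective α)
    (hcoker : Module.Finite A (Q ⧸ LinearMap.range α))
    (htensor : ∀ (M : Type) [AddCommGroup M] [Module A M],
      Function.Injective (LinearMap.rTensor M α)) :
    ∃ φ : Q →ₗ[A] P, φ ∘ₗ α = LinearMap.id := by
  classical
  set N := Q ⧸ LinearMap.range α with hN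
  set π : Q →ₗ[A] N := (LinearMap.range α).mkQ with hπ
  -- finite generation of N
  obtain ⟨n, v, hv⟩ := Module.Finite.exists_fin (R := A) (M := N)
  set g : (Fin n → A) →ₗ[A] N := Fintype.linearCombination A v with hgdef
  have hg : Function.Surjective g := by
    rw [← LinearMap.range_eq_top, hgdef, Fintype.range_linearCombination]
    exact hv
  -- kernel of g is f.g.
  obtain ⟨m, k, hk⟩ := Submodule.fg_iff_exists_fin_generating_family.mp
    (IsNoetherian.noetherian (LinearMap.ker g))
  -- lift g along π
  obtain ⟨h₀, hh₀⟩ := Module.projective_lifting_property π g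
    (Submodule.mkQ_surjective _)
  have hh₀' : ∀ x, π (h₀ x) = g x := fun x => LinearMap.congr_fun hh₀ x
  have hsingle : ∀ (l : ℕ) (c : A) (i : Fin l),
      c • (Pi.single i 1 : Fin l → A) = Pi.single i c := by
    intro l c i
    rw [← Pi.single_smul, smul_eq_mul, mul_one]
  -- choose p j with α (p j) = h₀ (k j)
  have hkj : ∀ j, h₀ (k j) ∈ LinearMap.range α := by
    intro j
    have hkker : k j ∈ LinearMap.ker g := by
      rw [← hk]; exact Submodule.subset_span ⟨j, rfl⟩
    have : π (h₀ (k j)) = 0 := by rw [hh₀']; exact hkker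
    rwa [hπ, Submodule.mkQ_apply, Submodule.Quotient.mk_eq_zero] at this
  choose p hp using hkj
  -- the purity module
  set col : Fin n → (Fin m → A) := fun i j => k j i with hcol
  set W : Submodule A (Fin m → A) := Submodule.span A (Set.range col) with hW
  set M := (Fin m → A) ⧸ W with hM
  set μ : (Fin m → A) →ₗ[A] M := W.mkQ with hμ
  set q : Fin n → Q := fun i => h₀ (Pi.single i 1) with hq
  have hh₀exp : ∀ x : Fin n → A, h₀ x = ∑ i, x i • q i := by
    intro x
    have hx : h₀ x = h₀ (∑ i, x i • (Pi.single i 1 : Fin n → A)) := by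
      congr 1
      rw [Finset.sum_congr rfl fun i _ => hsingle n (x i) i, Finset.univ_sum_single]
    rw [hx, map_sum]
    exact Finset.sum_congr rfl fun i _ => by rw [map_smul, hq]
  -- the element T and its image t
  set T : TensorProduct A P (Fin m → A) := ∑ j, p j ⊗ₜ[A] Pi.single j 1 with hT
  have key : LinearMap.rTensor M α (LinearMap.lTensor P μ T) = 0 := by
    rw [hT, map_sum, map_sum]
    simp only [LinearMap.lTensor_tmul, LinearMap.rTensor_tmul]
    have step1 : ∀ j, α (p j) ⊗ₜ[A] μ (Pi.single j 1)
        = ∑ i, q i ⊗ₜ[A] (k j i • μ (Pi.single j 1)) := by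
      intro j
      rw [hp, hh₀exp]
      rw [TensorProduct.sum_tmul]
      refine Finset.sum_congr rfl fun i _ => ?_
      rw [TensorProduct.smul_tmul]
    rw [Finset.sum_congr rfl fun j _ => step1 j, Finset.sum_comm]
    have step2 : ∀ i, ∑ j, q i ⊗ₜ[A] (k j i • μ (Pi.single j 1)) = 0 := by
      intro i
      rw [← TensorProduct.tmul_sum]
      have : ∑ j, k j i • μ (Pi.single j 1) = μ (col i) := by
        rw [Finset.sum_congr rfl fun j _ => (map_smul μ (k j i) (Pi.single j 1 : Fin m → A)).symm,
          ← map_sum]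
        congr 1
        rw [hcol]
        rw [Finset.sum_congr rfl fun j _ => hsingle m (k j i) j]
        exact Finset.univ_sum_single _
      rw [this]
      have : μ (col i) = 0 := by
        rw [hμ, Submodule.mkQ_apply, Submodule.Quotient.mk_eq_zero]
        exact Submodule.subset_span ⟨i, rfl⟩
      rw [this, TensorProduct.tmul_zero]
    rw [Finset.sum_congr rfl fun i _ => step2 i, Finset.sum_const_zero]
  have ht0 : LinearMap.lTensor P μ T = 0 := by
    apply htensor M
    rw [key, map_zero]
  -- T is in the image of P ⊗ W
  have hexact : Function.Exact (LinearMap.lTensor P W.subtype)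
      (LinearMap.lTensor P W.mkQ) :=
    lTensor_exact P (LinearMap.exact_subtype_mkQ W) (Submodule.mkQ_surjective W)
  obtain ⟨S, hS⟩ := (hexact T).mp ht0
  -- the combination map Φ
  set Φ : (Fin n → P) →ₗ[A] TensorProduct A P (Fin m → A) :=
    ∑ i : Fin n, ((TensorProduct.mk A P (Fin m → A)).flip (col i)) ∘ₗ
      (LinearMap.proj i) with hΦ
  have hΦapply : ∀ u : Fin n → P, Φ u = ∑ i, u i ⊗ₜ[A] col i := by
    intro u
    rw [hΦ]
    simp [LinearMap.sum_apply, TensorProduct.mk_apply]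
  have hrange : ∀ x : P, ∀ w : Fin m → A, w ∈ W →
      x ⊗ₜ[A] w ∈ LinearMap.range Φ := by
    intro x w hw
    refine Submodule.span_induction ?_ ?_ ?_ ?_ hw
    · rintro _ ⟨i, rfl⟩
      refine ⟨Pi.single i x, ?_⟩
      rw [hΦapply]
      rw [Finset.sum_eq_single i]
      · rw [Pi.single_eq_same]
      · intro i' _ hne
        rw [Pi.single_eq_of_ne hne, TensorProduct.zero_tmul]
      · intro h; exact absurd (Finset.mem_univ i) h
    · rw [TensorProduct.tmul_zero]; exact zero_mem _
    · intro a b _ _ ha hb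
      rw [TensorProduct.tmul_add]; exact add_mem ha hb
    · intro c a _ ha
      rw [TensorProduct.tmul_smul]; exact Submodule.smul_mem _ c ha
  have hTrange : T ∈ LinearMap.range Φ := by
    rw [← hS]
    clear hS
    induction S using TensorProduct.induction_on with
    | zero => rw [map_zero]; exact zero_mem _
    | tmul x w => exact hrange x w.1 w.2
    | add a b ha hb => rw [map_add]; exact add_mem ha hb
  obtain ⟨u, hu⟩ := hTrange
  -- extract coordinates
  have hcoord : ∀ j : Fin m, p j = ∑ i, k j i • u i := by
    intro j
    set ev : TensorProduct A P (Fin m → A) →ₗ[A] P :=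
      (TensorProduct.rid A P).toLinearMap ∘ₗ LinearMap.lTensor P (LinearMap.proj j) with hev
    have hevt : ∀ (x : P) (w : Fin m → A), ev (x ⊗ₜ[A] w) = w j • x := by
      intro x w
      rw [hev]
      simp [TensorProduct.rid_tmul]
    have h1 : ev T = p j := by
      rw [hT, map_sum]
      rw [Finset.sum_congr rfl fun j' _ => hevt (p j') (Pi.single j' 1)]
      rw [Finset.sum_eq_single j]
      · rw [Pi.single_eq_same, one_smul]
      · intro j' _ hne
        rw [Pi.single_eq_of_ne hne.symm, zero_smul]
      · intro h; exact absurd (Finset.mem_univ j) h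
    have h2 : ev (Φ u) = ∑ i, k j i • u i := by
      rw [hΦapply, map_sum]
      exact Finset.sum_congr rfl fun i _ => hevt (u i) (col i)
    rw [← h1, ← hu, h2]
  -- the correction map γ
  set γ : (Fin n → A) →ₗ[A] P := Fintype.linearCombination A u with hγ
  have hγk : ∀ j, γ (k j) = p j := by
    intro j
    rw [hγ, Fintype.linearCombination_apply, hcoord j]
  -- the corrected lift h
  set h : (Fin n → A) →ₗ[A] Q := h₀ - α ∘ₗ γ with hh
  have hker : LinearMap.ker g ≤ LinearMap.ker h := by
    rw [← hk, Submodule.span_le]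
    rintro _ ⟨j, rfl⟩
    simp only [SetLike.mem_coe, LinearMap.mem_ker, hh, LinearMap.sub_apply,
      LinearMap.comp_apply]
    rw [hγk, hp, sub_self]
  -- descend to σ : N → Q
  set e := g.quotKerEquivOfSurjective hg with he
  set σ : N →ₗ[A] Q := ((LinearMap.ker g).liftQ h hker) ∘ₗ e.symm.toLinearMap with hσ
  have hσg : ∀ x, σ (g x) = h x := by
    intro x
    have : e.symm (g x) = Submodule.Quotient.mk x := by
      apply e.injective
      rw [e.apply_symm_apply]
      rfl
    rw [hσ, LinearMap.comp_apply, LinearEquiv.coe_toLinearMap, this,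
      Submodule.liftQ_apply]
  have hπσ : ∀ y : N, π (σ y) = y := by
    intro y
    obtain ⟨x, rfl⟩ := hg y
    rw [hσg, hh]
    simp only [LinearMap.sub_apply, LinearMap.comp_apply, map_sub]
    have : π (α (γ x)) = 0 := by
      rw [hπ, Submodule.mkQ_apply, Submodule.Quotient.mk_eq_zero]
      exact ⟨γ x, rfl⟩
    rw [hh₀', this, sub_zero]
  -- final splitting
  set ψ : Q →ₗ[A] Q := LinearMap.id - σ ∘ₗ π with hψ
  have hψmem : ∀ x : Q, ψ x ∈ LinearMap.range α := by
    intro x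
    have : π (ψ x) = 0 := by
      rw [hψ]
      simp only [LinearMap.sub_apply, LinearMap.id_apply, LinearMap.comp_apply, map_sub]
      rw [hπσ, sub_self]
    rwa [hπ, Submodule.mkQ_apply, Submodule.Quotient.mk_eq_zero] at this
  set eα := LinearEquiv.ofInjective α hinj with heα
  refine ⟨eα.symm.toLinearMap ∘ₗ ψ.codRestrict (LinearMap.range α) hψmem, ?_⟩
  ext x
  have hψαx : ψ (α x) = α x := by
    have h0 : π (α x) = 0 := by
      rw [hπ, Submodule.mkQ_apply, Submodule.Quotient.mk_eq_zero]
      exact ⟨x, rfl⟩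
    calc ψ (α x) = α x - σ (π (α x)) := rfl
    _ = α x := by rw [(congrArg σ h0).trans (map_zero σ), sub_zero]
  simp only [LinearMap.comp_apply, LinearMap.id_apply, LinearEquiv.coe_toLinearMap]
  rw [LinearEquiv.symm_apply_eq]
  apply Subtype.ext
  rw [heα]
  simp only [LinearEquiv.ofInjective_apply]
  rw [LinearMap.codRestrict_apply, hψαx]
end

section
/- Let S be a Noetherian integral domain. If every ideal of S generated by a full system of parameters (after localizing at any maximal ideal) is plus closed, then every ideal generated by part of a system of parameters is plus closed. More precisely for a local domain (S, n): if every ideal generated by a full system of parameters is plus closed, and (x₁,…,x_t) is part of a system of parameters, then (x₁,…,x_t)⁺ = (x₁,…,x_t). -/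
/-!
STATEMENT 3: Let `(S, n)` be a Noetherian local domain of dimension `d`.  If every ideal
generated by a full system of parameters is plus closed, then every ideal generated by
part of a system of parameters is plus closed: if `(x₁, …, x_t)` is part of a system of
parameters `x₁, …, x_d`, then `(x₁, …, x_t)⁺ = (x₁, …, x_t)`.
-/

universe u

/-- `x` lies in the plus closure `I⁺` of the ideal `I`: there is a module-finite domain
extension `T` of `S` with `x ∈ I·T`. -/
def MemPlusClosure (S : Type u) [CommRing S] (I : Ideal S) (x : S) : Prop :=
  ∃ (T : Type u) (_ : CommRing T) (_ : IsDomain T) (_ : Algebra S T),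
    Function.Injective (algebraMap S T) ∧ Module.Finite S T ∧
      algebraMap S T x ∈ I.map (algebraMap S T)

/-- An ideal `I` is plus closed if `I⁺ = I`. -/
def IsPlusClosed (S : Type u) [CommRing S] (I : Ideal S) : Prop :=
  ∀ x : S, MemPlusClosure S I x → x ∈ I

theorem stmt3
    (S : Type u) [CommRing S] [IsDomain S] [IsNoetherianRing S] [IsLocalRing S]
    (d : ℕ) (hd : ringKrullDim S = d)
    -- every ideal generated by a full system of parameters is plus closed
    (hfull : ∀ x : Fin d → S,
      (Ideal.span (Set.range x)).radical = IsLocalRing.maximalIdeal S →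
        IsPlusClosed S (Ideal.span (Set.range x)))
    -- `x₁, …, x_d` is a system of parameters, and `t ≤ d`
    (x : Fin d → S)
    (hx : (Ideal.span (Set.range x)).radical = IsLocalRing.maximalIdeal S)
    (t : ℕ) (ht : t ≤ d) :
    IsPlusClosed S (Ideal.span (x '' {i : Fin d | (i : ℕ) < t})) := by
  intro z hz
  set n := IsLocalRing.maximalIdeal S with hn
  set I : Ideal S := Ideal.span (x '' {i : Fin d | (i : ℕ) < t}) with hI
  set K : Ideal S := Ideal.span (x '' {i : Fin d | ¬ (i : ℕ) < t}) with hK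
  -- span (range x) ≤ n
  have hspan_le : Ideal.span (Set.range x) ≤ n := hx ▸ Ideal.le_radical
  have hxmem : ∀ i, x i ∈ n := fun i =>
    hspan_le (Ideal.subset_span ⟨i, rfl⟩)
  have hIle : I ≤ n := Ideal.span_le.mpr (by rintro _ ⟨i, -, rfl⟩; exact hxmem i)
  have hKle : K ≤ n := Ideal.span_le.mpr (by rintro _ ⟨i, -, rfl⟩; exact hxmem i)
  have hInetop : I ≠ ⊤ := fun h => (IsLocalRing.maximalIdeal.isMaximal S).ne_top
    (top_le_iff.mp (h ▸ hIle))
  -- For every positive s, z ∈ I ⊔ K ^ s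
  have key : ∀ s : ℕ, 0 < s → z ∈ I ⊔ K ^ s := by
    intro s hs
    set y : Fin d → S := fun i => if (i : ℕ) < t then x i else x i ^ s with hy
    have hrad : (Ideal.span (Set.range y)).radical = n := by
      rw [← hx]
      apply le_antisymm
      · have : Ideal.span (Set.range y) ≤ (Ideal.span (Set.range x)).radical := by
          rw [Ideal.span_le]
          rintro _ ⟨i, rfl⟩
          simp only [hy]
          split
          · exact Ideal.le_radical (Ideal.subset_span (Set.mem_range_self i))
          · exact Ideal.pow_mem_of_mem _
              (Ideal.le_radical (Ideal.subset_span (Set.mem_range_self i))) s hs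
        calc (Ideal.span (Set.range y)).radical
            ≤ ((Ideal.span (Set.range x)).radical).radical := Ideal.radical_mono this
          _ = (Ideal.span (Set.range x)).radical := Ideal.radical_idem _
      · have : Ideal.span (Set.range x) ≤ (Ideal.span (Set.range y)).radical := by
          rw [Ideal.span_le]
          rintro _ ⟨i, rfl⟩
          by_cases h : (i : ℕ) < t
          · exact Ideal.le_radical (Ideal.subset_span ⟨i, by simp [hy, h]⟩)
          · exact ⟨s, Ideal.subset_span ⟨i, by simp [hy, h]⟩⟩
        calc (Ideal.span (Set.range x)).radical
            ≤ ((Ideal.span (Set.range y)).radical).radical := Ideal.radical_mono this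
          _ = (Ideal.span (Set.range y)).radical := Ideal.radical_idem _
    -- z is in the plus closure of span (range y)
    have hIley : I ≤ Ideal.span (Set.range y) := by
      rw [hI, Ideal.span_le]
      rintro _ ⟨i, hi, rfl⟩
      exact Ideal.subset_span ⟨i, by simp [hy, Set.mem_setOf_eq.mp hi]⟩
    have hzy : z ∈ Ideal.span (Set.range y) := by
      apply hfull y hrad
      obtain ⟨T, _, _, _, hinj, hfin, hmem⟩ := hz
      exact ⟨T, ‹_›, ‹_›, ‹_›, hinj, hfin, Ideal.map_mono hIley hmem⟩
    -- span (range y) ≤ I ⊔ K ^ s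
    refine (Ideal.span_le.mpr ?_) hzy
    rintro _ ⟨i, rfl⟩
    simp only [hy]
    by_cases h : (i : ℕ) < t
    · simp only [h, if_true]
      exact Ideal.mem_sup_left (Ideal.subset_span ⟨i, h, rfl⟩)
    · simp only [h, if_false]
      have hik : x i ∈ K := Ideal.subset_span ⟨i, h, rfl⟩
      exact Ideal.mem_sup_right (Ideal.pow_mem_pow hik s)
  -- pass to the quotient S ⧸ I
  let π := Ideal.Quotient.mk I
  have hπsurj : Function.Surjective π := Ideal.Quotient.mk_surjective
  haveI : Nontrivial (S ⧸ I) := Ideal.Quotient.nontrivial_iff.mpr hInetop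
  haveI : IsNoetherianRing (S ⧸ I) := isNoetherianRing_of_surjective S _ π hπsurj
  haveI : IsLocalRing (S ⧸ I) := IsLocalRing.of_surjective' π hπsurj
  have hKbar : K.map π ≠ ⊤ := by
    intro h
    have h2 : Ideal.comap π (Ideal.map π K) = ⊤ := by rw [h, Ideal.comap_top]
    rw [Ideal.comap_map_of_surjective π hπsurj, ← RingHom.ker_eq_comap_bot,
      Ideal.mk_ker] at h2
    exact (IsLocalRing.maximalIdeal.isMaximal S).ne_top
      (top_le_iff.mp (h2 ▸ sup_le hKle hIle))
  have hbot : (⨅ s : ℕ, (K.map π) ^ s) = ⊥ :=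
    Ideal.iInf_pow_eq_bot_of_isLocalRing (K.map π) hKbar
  have hπz : π z ∈ (⨅ s : ℕ, (K.map π) ^ s) := by
    rw [Ideal.mem_iInf]
    intro s
    rcases Nat.eq_zero_or_pos s with hs | hs
    · simp [hs]
    · have hz' := key s hs
      have : π z ∈ (I ⊔ K ^ s).map π := Ideal.mem_map_of_mem π hz'
      rwa [Ideal.map_sup, Ideal.map_pow, Ideal.map_quotient_self, bot_sup_eq] at this
  rw [hbot] at hπz
  exact (Ideal.Quotient.eq_zero_iff_mem).mp (Submodule.mem_bot _ |>.mp hπz)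
end

section
/- Let S be a Noetherian integral domain whose integral closure in any finite extension is module-finite (e.g. S excellent). If every principal ideal of S is plus closed, then every principal ideal of S is integrally closed, and hence S is a normal domain. -/
/-!
STATEMENT 4: Let `S` be a Noetherian integral domain whose integral closure in any finite
extension of its fraction field is module-finite (e.g. `S` excellent).  If every principal
ideal of `S` is plus closed, then every principal ideal of `S` is integrally closed, and
hence `S` is a normal (integrally closed) domain.
-/

universe u

/-- `x` is integral over the ideal `I`: it satisfies an equation
`x^n + c₁ x^(n-1) + ⋯ + c_n = 0` with `c_i ∈ I^i`. -/
def IsIntegralOverIdeal (S : Type u) [CommRing S] (I : Ideal S) (x : S) : Prop :=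
  ∃ n : ℕ, 0 < n ∧ ∃ c : ℕ → S, (∀ i, 1 ≤ i → i ≤ n → c i ∈ I ^ i) ∧
    x ^ n + ∑ i ∈ Finset.range n, c (i + 1) * x ^ (n - (i + 1)) = 0

set_option synthInstance.maxHeartbeats 800000 in
set_option maxHeartbeats 1600000 in
theorem key_lemma
    (S : Type u) [CommRing S] [IsDomain S]
    (hplus : ∀ a : S, IsPlusClosed S (Ideal.span {a}))
    (a x : S) (h : IsIntegralOverIdeal S (Ideal.span {a}) x) : x ∈ Ideal.span {a} := by
  obtain ⟨n, hn, c, hc, heq⟩ := h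
  rcases eq_or_ne a 0 with rfl | ha
  · -- all c (i+1) are 0, so x ^ n = 0 and x = 0
    have hc0 : ∀ i ∈ Finset.range n, c (i + 1) * x ^ (n - (i + 1)) = 0 := by
      intro i hi
      have hm := hc (i + 1) (by omega) (Finset.mem_range.mp hi)
      rw [Ideal.span_singleton_pow, zero_pow (by omega), Ideal.mem_span_singleton,
        zero_dvd_iff] at hm
      rw [hm, zero_mul]
    rw [Finset.sum_eq_zero hc0, add_zero] at heq
    have : x = 0 := pow_eq_zero_iff (by omega) |>.mp heq
    simp [this]
  · -- main case
    set K := FractionRing S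
    set f := algebraMap S K with hf
    have hinjK : Function.Injective f := IsFractionRing.injective S K
    have hfa : f a ≠ 0 := fun h0 => ha (hinjK (by simpa using h0))
    set z : K := f x / f a with hzdef
    have hfz : f a * z = f x := mul_div_cancel₀ (f x) hfa
    -- choose d with c (i+1) = a^(i+1) * d i
    have hd : ∀ i : ℕ, ∃ d : S, i < n → c (i + 1) = a ^ (i + 1) * d := by
      intro i
      by_cases hi : i < n
      · have hm := hc (i + 1) (by omega) (by omega)
        rw [Ideal.span_singleton_pow, Ideal.mem_span_singleton] at hm
        obtain ⟨d, hd⟩ := hm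
        exact ⟨d, fun _ => hd⟩
      · exact ⟨0, fun h => absurd h hi⟩
    choose d hdspec using hd
    -- the image equation in K
    have heqK : (f x) ^ n + ∑ i ∈ Finset.range n, f (c (i + 1)) * (f x) ^ (n - (i + 1)) = 0 := by
      have := congrArg f heq
      simpa [map_add, map_sum, map_mul, map_pow] using this
    -- z satisfies a monic integral equation
    have hz : z ^ n + ∑ i ∈ Finset.range n, f (d i) * z ^ (n - (i + 1)) = 0 := by
      apply mul_left_cancel₀ (pow_ne_zero n hfa)
      rw [mul_zero, mul_add, Finset.mul_sum, ← heqK]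
      congr 1
      · rw [← mul_pow, hfz]
      · apply Finset.sum_congr rfl
        intro i hi
        have hi' := Finset.mem_range.mp hi
        have hsplit : (f a) ^ n = (f a) ^ (i + 1) * (f a) ^ (n - (i + 1)) := by
          rw [← pow_add]; congr 1; omega
        have h2 : (f a) ^ (n - (i + 1)) * z ^ (n - (i + 1)) = (f x) ^ (n - (i + 1)) := by
          rw [← mul_pow, hfz]
        rw [hsplit, hdspec i hi', map_mul, map_pow]
        linear_combination ((f a) ^ (i + 1) * f (d i)) * h2
    have hzint : IsIntegral S z := by
      refine ⟨Polynomial.X ^ n + ∑ i ∈ Finset.range n,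
        Polynomial.C (d i) * Polynomial.X ^ (n - (i + 1)), ?_, ?_⟩
      · apply Polynomial.monic_X_pow_add
        apply lt_of_le_of_lt (Polynomial.degree_sum_le _ _)
        rw [Finset.sup_lt_iff (by exact_mod_cast WithBot.bot_lt_coe n)]
        intro i hi
        refine lt_of_le_of_lt (Polynomial.degree_C_mul_X_pow_le _ _) ?_
        exact_mod_cast Nat.sub_lt (by omega) (by omega)
      · rw [← Polynomial.aeval_def]
        simpa [map_add, map_sum, map_mul, map_pow] using hz
    -- build T
    set T := Algebra.adjoin S ({z} : Set K) with hT
    have hinjT : Function.Injective (algebraMap S ↥T) := fun u v huv => by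
      simpa using congrArg (Subtype.val) huv
    have hfinT : Module.Finite S ↥T :=
      Module.Finite.iff_fg.mpr hzint.fg_adjoin_singleton
    have hmem : algebraMap S ↥T x ∈ (Ideal.span {a}).map (algebraMap S ↥T) := by
      rw [Ideal.map_span, Set.image_singleton, Ideal.mem_span_singleton]
      refine ⟨⟨z, Algebra.subset_adjoin rfl⟩, ?_⟩
      apply Subtype.ext
      show f x = f a * z
      rw [hfz]
    exact hplus a x ⟨↥T, inferInstance, inferInstance, inferInstance, hinjT, hfinT, hmem⟩

set_option synthInstance.maxHeartbeats 800000 in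
set_option maxHeartbeats 1600000 in
theorem stmt4
    (S : Type u) [CommRing S] [IsDomain S] [IsNoetherianRing S]
    -- the integral closure of `S` in any finite extension of `Frac S` is module-finite
    (hN2 : ∀ (L : Type u) [Field L] [Algebra (FractionRing S) L] [Algebra S L]
      [IsScalarTower S (FractionRing S) L], FiniteDimensional (FractionRing S) L →
        Module.Finite S (integralClosure S L))
    -- every principal ideal of `S` is plus closed
    (hplus : ∀ a : S, IsPlusClosed S (Ideal.span {a})) :
    (∀ a x : S, IsIntegralOverIdeal S (Ideal.span {a}) x → x ∈ Ideal.span {a}) ∧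
      IsIntegrallyClosed S := by
  have key := key_lemma S hplus
  refine ⟨key, (isIntegrallyClosed_iff (FractionRing S)).mpr ?_⟩
  rintro w ⟨p, hmonic, hpz⟩
  have hinjK : Function.Injective (algebraMap S (FractionRing S)) :=
    IsFractionRing.injective S (FractionRing S)
  obtain ⟨x, a, haS, hxa⟩ := IsFractionRing.div_surjective (A := S) w
  have ha : a ≠ 0 := nonZeroDivisors.ne_zero haS
  have hfa : algebraMap S (FractionRing S) a ≠ 0 := fun h0 => ha (hinjK (by simpa using h0))
  have hn0 : 0 < p.natDegree := by
    rcases Nat.eq_zero_or_pos p.natDegree with h0 | h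
    · exfalso
      have hp1 : p = 1 := Polynomial.eq_one_of_monic_natDegree_zero hmonic h0
      rw [hp1] at hpz
      simp at hpz
    · exact h
  set n := p.natDegree with hn
  set f := algebraMap S (FractionRing S) with hf
  have hfx : f x = w * f a := by
    rw [← hxa]; field_simp
  have haev : Polynomial.aeval w p = 0 := by rwa [Polynomial.aeval_def]
  have hK : w ^ n + ∑ i ∈ Finset.range n, f (p.coeff i) * w ^ i = 0 := by
    have h2 := Polynomial.aeval_eq_sum_range (R := S) (p := p) w
    rw [haev, Finset.sum_range_succ, hmonic.coeff_natDegree] at h2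
    rw [add_comm]
    simpa [Algebra.smul_def] using h2.symm
  have hint : IsIntegralOverIdeal S (Ideal.span {a}) x := by
    refine ⟨n, hn0, fun i => p.coeff (n - i) * a ^ i, ?_, ?_⟩
    · intro i h1 h2
      rw [Ideal.span_singleton_pow, Ideal.mem_span_singleton]
      exact dvd_mul_left _ _
    · apply hinjK
      have hmap : f (x ^ n + ∑ i ∈ Finset.range n,
          p.coeff (n - (i + 1)) * a ^ (i + 1) * x ^ (n - (i + 1))) =
          (f a) ^ n * (w ^ n + ∑ i ∈ Finset.range n,
            f (p.coeff (n - (i + 1))) * w ^ (n - (i + 1))) := by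
        rw [map_add, map_pow, map_sum, mul_add, Finset.mul_sum, hfx, mul_pow]
        congr 1
        · ring
        · apply Finset.sum_congr rfl
          intro i hi
          have hi' := Finset.mem_range.mp hi
          have hsplit : (f a) ^ n = (f a) ^ (i + 1) * (f a) ^ (n - (i + 1)) := by
            rw [← pow_add]; congr 1; omega
          rw [map_mul, map_mul, map_pow, map_pow, hfx, mul_pow, hsplit]
          ring
      rw [hmap]
      have hre : ∑ i ∈ Finset.range n, f (p.coeff (n - (i + 1))) * w ^ (n - (i + 1)) =
          ∑ i ∈ Finset.range n, f (p.coeff i) * w ^ i := by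
        have hcongr : ∀ i ∈ Finset.range n, f (p.coeff (n - (i + 1))) * w ^ (n - (i + 1)) =
            (fun j => f (p.coeff j) * w ^ j) (n - 1 - i) := by
          intro i hi
          have hi' := Finset.mem_range.mp hi
          have harith : n - (i + 1) = n - 1 - i := by omega
          rw [harith]
        rw [Finset.sum_congr rfl hcongr]
        exact Finset.sum_range_reflect (fun j => f (p.coeff j) * w ^ j) n
      rw [hre, hK, mul_zero, map_zero]
  have hx := key a x hint
  rw [Ideal.mem_span_singleton] at hx
  obtain ⟨s, hs⟩ := hx
  refine ⟨s, ?_⟩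
  exact mul_left_cancel₀ hfa (by rw [← map_mul, ← hs, hfx]; ring)
end

section
/- Let A be a regular local domain of equal characteristic, and suppose that for the local domain (S, n), condition (2) holds: for every regular local ring A with S = A/P and every module-finite torsion-free extension A → B with Q ∈ Spec B lying over P, the inclusion P → Q splits as A-modules. Then S satisfies the vanishing conditions for maps of Tor: for every A → R → S with A regular local, A → R module-finite torsion-free, A ↠ S surjective, and every A-module M, the map Tor₁^A(M, R) → Tor₁^A(M, S) is zero. -/
/-!
STATEMENT 13: Suppose the local domain `S` satisfies condition (2): for every regular
local ring `A` with `S = A/P` and every module-finite torsion-free extension `A → B` with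
`Q ∈ Spec B` lying over `P`, the inclusion `P → Q` splits as `A`-modules.  Then `S`
satisfies the vanishing conditions for maps of Tor in the surjective form: for every
`A → R → S` with `A` regular local, `A → R` module-finite torsion-free and `A ↠ S`
surjective, and every `A`-module `M`, the map `Tor₁^A(M, R) → Tor₁^A(M, S)` is zero.
-/

open IsLocalRing CategoryTheory

universe u

lemma aux_retraction {A R S : Type u} [CommRing A] [CommRing R] [CommRing S]
    [Algebra A R] [Algebra A S] [Algebra R S] [IsScalarTower A R S]
    (hsurj : Function.Surjective (algebraMap A S))
    (φ : ((RingHom.ker (algebraMap R S)).restrictScalars A) →ₗ[A]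
      (RingHom.ker (algebraMap A S)))
    (hφ : ∀ (p : A) (_ : p ∈ RingHom.ker (algebraMap A S))
      (hm : algebraMap A R p ∈ (RingHom.ker (algebraMap R S)).restrictScalars A),
      ((φ ⟨algebraMap A R p, hm⟩ : RingHom.ker (algebraMap A S)) : A) = p) :
    ∃ ψ : R →ₗ[A] A, ∀ r, algebraMap A S (ψ r) = algebraMap R S r := by
  have mem : ∀ (r : R) (a : A), algebraMap A S a = algebraMap R S r →
      r - algebraMap A R a ∈ (RingHom.ker (algebraMap R S)).restrictScalars A := by
    intro r a h
    have : algebraMap R S (r - algebraMap A R a) = 0 := by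
      rw [map_sub, ← IsScalarTower.algebraMap_apply, h, sub_self]
    exact this
  have key : ∀ (r : R) (a a' : A) (ha : algebraMap A S a = algebraMap R S r)
      (ha' : algebraMap A S a' = algebraMap R S r),
      a + ((φ ⟨r - algebraMap A R a, mem r a ha⟩ : RingHom.ker (algebraMap A S)) : A)
        = a' + ((φ ⟨r - algebraMap A R a', mem r a' ha'⟩ :
          RingHom.ker (algebraMap A S)) : A) := by
    intro r a a' ha ha'
    have hp : a' - a ∈ RingHom.ker (algebraMap A S) := by
      rw [RingHom.mem_ker, map_sub, ha, ha', sub_self]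
    have hm2 : algebraMap A R (a' - a) ∈
        (RingHom.ker (algebraMap R S)).restrictScalars A := by
      have : algebraMap R S (algebraMap A R (a' - a)) = 0 := by
        rw [← IsScalarTower.algebraMap_apply, map_sub, ha, ha', sub_self]
      exact this
    have heq : (⟨r - algebraMap A R a', mem r a' ha'⟩ :
        (RingHom.ker (algebraMap R S)).restrictScalars A)
        = ⟨r - algebraMap A R a, mem r a ha⟩ - ⟨algebraMap A R (a' - a), hm2⟩ := by
      apply Subtype.ext
      show r - algebraMap A R a' = (r - algebraMap A R a) - algebraMap A R (a' - a)
      rw [map_sub]; ring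
    have hcoe : ((φ ⟨algebraMap A R (a' - a), hm2⟩ :
        RingHom.ker (algebraMap A S)) : A) = a' - a := hφ (a' - a) hp hm2
    rw [heq, map_sub, AddSubgroupClass.coe_sub, hcoe]; ring
  have gdef : ∀ r : R, ∃ a : A, algebraMap A S a = algebraMap R S r := fun r =>
    hsurj (algebraMap R S r)
  classical
  set g : R → A := fun r => (gdef r).choose +
    ((φ ⟨r - algebraMap A R (gdef r).choose, mem r _ (gdef r).choose_spec⟩ :
      RingHom.ker (algebraMap A S)) : A) with hgdef
  have hg : ∀ (r : R) (a : A) (ha : algebraMap A S a = algebraMap R S r),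
      g r = a + ((φ ⟨r - algebraMap A R a, mem r a ha⟩ :
        RingHom.ker (algebraMap A S)) : A) := fun r a ha =>
    key r _ a (gdef r).choose_spec ha
  refine ⟨{ toFun := g, map_add' := ?_, map_smul' := ?_ }, ?_⟩
  · intro r r'
    show g (r + r') = g r + g r'
    have ha : algebraMap A S ((gdef r).choose + (gdef r').choose)
        = algebraMap R S (r + r') := by
      rw [map_add, map_add, (gdef r).choose_spec, (gdef r').choose_spec]
    rw [hg (r + r') _ ha, hg r _ (gdef r).choose_spec, hg r' _ (gdef r').choose_spec]
    have heq : (⟨(r + r') - algebraMap A R ((gdef r).choose + (gdef r').choose),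
        mem _ _ ha⟩ : (RingHom.ker (algebraMap R S)).restrictScalars A)
        = ⟨r - algebraMap A R (gdef r).choose, mem r _ (gdef r).choose_spec⟩
          + ⟨r' - algebraMap A R (gdef r').choose, mem r' _ (gdef r').choose_spec⟩ := by
      apply Subtype.ext
      show (r + r') - algebraMap A R ((gdef r).choose + (gdef r').choose)
        = (r - algebraMap A R (gdef r).choose) + (r' - algebraMap A R (gdef r').choose)
      rw [map_add]; ring
    rw [heq, map_add, Submodule.coe_add]; ring
  · intro c r
    have ha : algebraMap A S (c * (gdef r).choose) = algebraMap R S (c • r) := by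
      rw [map_mul, (gdef r).choose_spec, Algebra.smul_def,
        map_mul, ← IsScalarTower.algebraMap_apply]
    show g (c • r) = c • g r
    rw [hg (c • r) _ ha, hg r _ (gdef r).choose_spec]
    have heq : (⟨c • r - algebraMap A R (c * (gdef r).choose), mem _ _ ha⟩ :
        (RingHom.ker (algebraMap R S)).restrictScalars A)
        = c • ⟨r - algebraMap A R (gdef r).choose, mem r _ (gdef r).choose_spec⟩ := by
      apply Subtype.ext
      show c • r - algebraMap A R (c * (gdef r).choose)
        = c • (r - algebraMap A R (gdef r).choose)
      rw [smul_sub, map_mul, Algebra.smul_def, Algebra.smul_def]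
    rw [heq, map_smul]
    have : ((c • φ ⟨r - algebraMap A R (gdef r).choose, mem r _ (gdef r).choose_spec⟩ :
        RingHom.ker (algebraMap A S)) : A)
        = c * ((φ ⟨r - algebraMap A R (gdef r).choose, mem r _ (gdef r).choose_spec⟩ :
          RingHom.ker (algebraMap A S)) : A) := rfl
    rw [this, smul_eq_mul]; ring
  · intro r
    show algebraMap A S (g r) = _
    rw [hg r _ (gdef r).choose_spec, map_add,
      (φ ⟨r - algebraMap A R (gdef r).choose, mem r _ (gdef r).choose_spec⟩).2,
      add_zero, (gdef r).choose_spec]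

/-- A regular local ring: Noetherian local, whose maximal ideal is generated by
`dim`-many elements. -/
def IsRegularLocal (A : Type u) [CommRing A] : Prop :=
  IsNoetherianRing A ∧ IsLocalRing A ∧
    ∃ (s : Finset A) (_ : IsLocalRing A),
      Ideal.span (s : Set A) = maximalIdeal A ∧ (s.card : WithBot ℕ∞) = ringKrullDim A

theorem stmt13
    (S : Type u) [CommRing S] [IsDomain S] [IsLocalRing S]
    -- condition (2): splitting of `P → Q` in module-finite torsion-free extensions
    (h2 : ∀ (A : Type u) [CommRing A] [IsDomain A], IsRegularLocal A →
      ∀ (f : A →+* S), Function.Surjective f →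
      ∀ (B : Type u) [CommRing B] [Algebra A B],
        Function.Injective (algebraMap A B) → Module.Finite A B →
        (∀ a : A, a ≠ 0 → ∀ b : B, a • b = 0 → b = 0) →
      ∀ (Q : Ideal B) (_hQ : Q.IsPrime)
        (hQP : Q.comap (algebraMap A B) = RingHom.ker f),
        ∃ φ : (Q.restrictScalars A) →ₗ[A] (RingHom.ker f),
          ∀ p : RingHom.ker f, φ ⟨algebraMap A B p.1, by
            exact Ideal.mem_comap.mp (by rw [hQP]; exact p.2)⟩ = p) :
    -- the vanishing condition for maps of Tor (for `i = 1`, with `A ↠ S` surjective)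
    ∀ (A : Type u) [CommRing A] [IsDomain A], IsRegularLocal A →
    ∀ (R : Type u) [CommRing R] [Algebra A R] [Algebra A S] [Algebra R S]
      [IsScalarTower A R S],
      Function.Injective (algebraMap A R) → Module.Finite A R →
      (∀ a : A, a ≠ 0 → ∀ r : R, a • r = 0 → r = 0) →
      Function.Surjective (algebraMap A S) →
    ∀ M : ModuleCat A,
      ((Tor (ModuleCat A) 1).obj M).map
        (ModuleCat.ofHom (IsScalarTower.toAlgHom A R S).toLinearMap) = 0 := by
  intro A _ _ hA R _ _ _ _ _ hinj hfin htf hsurj M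
  haveI : (RingHom.ker (algebraMap R S)).IsPrime := RingHom.ker_isPrime _
  have hQP : (RingHom.ker (algebraMap R S)).comap (algebraMap A R)
      = RingHom.ker (algebraMap A S) := by
    rw [RingHom.comap_ker, ← IsScalarTower.algebraMap_eq]
  obtain ⟨φ, hφ⟩ := h2 A hA (algebraMap A S) hsurj R hinj hfin htf
    (RingHom.ker (algebraMap R S)) inferInstance hQP
  obtain ⟨ψ, hψ⟩ := aux_retraction hsurj φ (fun p hp hm => by
    exact congrArg Subtype.val (hφ ⟨p, hp⟩))
  have hfact : ModuleCat.ofHom (IsScalarTower.toAlgHom A R S).toLinearMap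
      = ModuleCat.ofHom ψ ≫ ModuleCat.ofHom (Algebra.linearMap A S) := by
    apply ModuleCat.hom_ext
    apply LinearMap.ext
    intro r
    exact (hψ r).symm
  rw [hfact, Functor.map_comp]
  haveI : Projective (ModuleCat.of A A) :=
    (IsProjective.iff_projective A).mp inferInstance
  have hz := isZero_Tor_succ_of_projective (C := ModuleCat A) M (ModuleCat.of A A) 0
  rw [hz.eq_of_tgt (((Tor (ModuleCat A) 1).obj M).map (ModuleCat.ofHom ψ)) 0, Limits.zero_comp]
end

section
/- Let S ⊆ T be a module-finite extension of Noetherian domains with S = A/P for a Noetherian ring A and prime P. Choose generators t₁,…,t_n of T over S, monic polynomials f₁,…,f_n over S satisfied by the t_i, and lifts of the f_i to monic polynomials over A. Then B = A[x₁,…,x_n]/(f₁,…,f_n) is a finite free A-module, there is a natural surjection B ↠ T whose kernel Q is a prime ideal of B lying over P, and the inclusion A → B splits as a map of A-modules. -/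
/-!
STATEMENT 15: Let `S ⊆ T` be a module-finite extension of (Noetherian) domains with
`S = A/P` for a Noetherian ring `A` and prime `P`.  Then (lifting monic equations for a
finite set of generators of `T` over `S`) there is an `A`-algebra `B` which is a finite
free `A`-module, a surjection `g : B ↠ T` compatible with `A → S → T`, whose kernel `Q`
is a prime ideal of `B` lying over `P`, and the inclusion `A → B` splits as a map of
`A`-modules.
-/

universe u


open Polynomial

theorem key
    (A : Type u) [CommRing A]
    (T : Type u) [CommRing T] [IsDomain T]
    (φ : A →+* T) (hint : ∀ x : T, ∃ f : A[X], f.Monic ∧ f.eval₂ φ x = 0)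
    (n : ℕ) (t : Fin n → T) :
    ∃ (B : Type u) (_ : CommRing B) (_ : Algebra A B),
      Module.Finite A B ∧
      ∃ (ι : Type u) (_ : Fintype ι) (b : Module.Basis ι A B) (i₀ : ι),
        b i₀ = 1 ∧
        ∃ g : B →+* T,
          (∀ a : A, g (algebraMap A B a) = φ a) ∧ ∀ j, t j ∈ g.range := by
  induction n with
  | zero =>
    refine ⟨A, inferInstance, inferInstance, inferInstance, PUnit, inferInstance,
      Module.Basis.singleton PUnit A, PUnit.unit, Module.Basis.singleton_apply _ _ _, φ, ?_, ?_⟩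
    · intro a; simp [Algebra.algebraMap_self_apply]
    · exact fun j => j.elim0
  | succ n ih =>
    obtain ⟨B, _, _, hBfin, ι, _, b, i₀, hb1, g, hg, hrange⟩ := ih (fun j => t j.succ)
    obtain ⟨f, hf, hev⟩ := hint (t 0)
    set p : B[X] := f.map (algebraMap A B) with hp
    have hpm : p.Monic := hf.map _
    have hdeg : 1 ≤ f.natDegree := by
      by_contra h
      have h0 : f.natDegree = 0 := by omega
      have : f = 1 := (Polynomial.Monic.natDegree_eq_zero hf).mp h0
      rw [this] at hev
      simp at hev
    haveI : Nontrivial B := g.domain_nontrivial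
    have hevp : p.eval₂ g (t 0) = 0 := by
      rw [hp, Polynomial.eval₂_map]
      have : g.comp (algebraMap A B) = φ := RingHom.ext hg
      rw [this, hev]
    refine ⟨AdjoinRoot p, inferInstance, inferInstance, ?_, ?_⟩
    · have h1 : Module.Finite B (AdjoinRoot p) :=
        Module.Finite.of_basis (AdjoinRoot.powerBasis' hpm).basis
      exact Module.Finite.trans B (AdjoinRoot p)
    · have hdim : 0 < (AdjoinRoot.powerBasis' hpm).dim := by
        have : p.natDegree = f.natDegree := hf.natDegree_map _
        simp only [AdjoinRoot.powerBasis'_dim, this]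
        omega
      refine ⟨ι × Fin (AdjoinRoot.powerBasis' hpm).dim, inferInstance,
        b.smulTower (AdjoinRoot.powerBasis' hpm).basis, (i₀, ⟨0, hdim⟩), ?_, ?_⟩
      · rw [Module.Basis.smulTower_apply, hb1, one_smul]
        rw [(AdjoinRoot.powerBasis' hpm).basis_eq_pow]
        simp
      · refine ⟨AdjoinRoot.lift g (t 0) hevp, ?_, ?_⟩
        · intro a
          rw [AdjoinRoot.algebraMap_eq' A, RingHom.comp_apply, AdjoinRoot.lift_of, hg]
        · intro j
          refine Fin.cases ?_ ?_ j
          · exact ⟨AdjoinRoot.root p, AdjoinRoot.lift_root hevp⟩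
          · intro k
            obtain ⟨x, hx⟩ := hrange k
            exact ⟨AdjoinRoot.of p x, by rw [AdjoinRoot.lift_of, hx]⟩

theorem stmt15
    (A : Type u) [CommRing A] [IsNoetherianRing A]
    (P : Ideal A) (hP : P.IsPrime)
    (T : Type u) [CommRing T] [IsDomain T] [Algebra (A ⧸ P) T]
    (hinj : Function.Injective (algebraMap (A ⧸ P) T))
    (hfin : Module.Finite (A ⧸ P) T) :
    ∃ (B : Type u) (_ : CommRing B) (_ : Algebra A B),
      Module.Finite A B ∧ Module.Free A B ∧
      ∃ g : B →+* T,
        Function.Surjective g ∧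
        (∀ a : A, g (algebraMap A B a) = algebraMap (A ⧸ P) T (Ideal.Quotient.mk P a)) ∧
        (RingHom.ker g).IsPrime ∧
        (RingHom.ker g).comap (algebraMap A B) = P ∧
        ∃ θ : B →ₗ[A] A, ∀ a : A, θ (algebraMap A B a) = a := by
  set φ : A →+* T := (algebraMap (A ⧸ P) T).comp (Ideal.Quotient.mk P) with hφ
  -- every element of T is integral over A
  have hint : ∀ x : T, ∃ f : A[X], f.Monic ∧ f.eval₂ φ x = 0 := by
    letI : Algebra A T := φ.toAlgebra
    haveI : IsScalarTower A (A ⧸ P) T := IsScalarTower.of_algebraMap_eq' rfl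
    haveI : Module.Finite A (A ⧸ P) :=
      Module.Finite.of_surjective (Algebra.linearMap A (A ⧸ P)) Ideal.Quotient.mk_surjective
    haveI : Module.Finite A T := Module.Finite.trans (A ⧸ P) T
    haveI : Algebra.IsIntegral A T := Algebra.IsIntegral.of_finite A T
    intro x
    obtain ⟨f, hf, hev⟩ := Algebra.IsIntegral.isIntegral (R := A) x
    exact ⟨f, hf, hev⟩
  obtain ⟨n, t, hspan⟩ := Module.Finite.exists_fin (R := A ⧸ P) (M := T)
  obtain ⟨B, _, _, hBfin, ι, _, b, i₀, hb1, g, hg, hrange⟩ := key A T φ hint n t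
  refine ⟨B, inferInstance, inferInstance, hBfin, Module.Free.of_basis b, g, ?_, hg, ?_, ?_, ?_⟩
  · -- surjectivity
    intro x
    have hx : x ∈ Submodule.span (A ⧸ P) (Set.range t) := by rw [hspan]; trivial
    refine Submodule.span_induction (p := fun x _ => x ∈ g.range) ?_ ?_ ?_ ?_ hx
    · rintro _ ⟨j, rfl⟩; exact hrange j
    · exact Subring.zero_mem _
    · intro x y _ _ hx hy; exact Subring.add_mem _ hx hy
    · intro s x _ hx
      obtain ⟨a, rfl⟩ := Ideal.Quotient.mk_surjective s
      obtain ⟨y, rfl⟩ := hx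
      refine ⟨algebraMap A B a * y, ?_⟩
      rw [map_mul, hg, Algebra.smul_def]
      rfl
  · exact RingHom.ker_isPrime g
  · ext a
    rw [Ideal.mem_comap, RingHom.mem_ker, hg]
    show φ a = 0 ↔ a ∈ P
    simp only [hφ, RingHom.comp_apply]
    constructor
    · intro h
      have : Ideal.Quotient.mk P a = 0 := hinj (by rw [h, map_zero])
      exact (Ideal.Quotient.eq_zero_iff_mem).mp this
    · intro h
      rw [(Ideal.Quotient.eq_zero_iff_mem).mpr h, map_zero]
  · refine ⟨b.coord i₀, fun a => ?_⟩
    rw [Algebra.algebraMap_eq_smul_one, ← hb1, map_smul, Module.Basis.coord_apply, Module.Basis.repr_self,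
      Finsupp.single_eq_same, smul_eq_mul, mul_one]
end
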